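/- Fix an integer k ≥ 1, data a₁,…,a_k ∈ (0,∞) and z₁,…,z_k ∈ {0,1}, and parameters μ ∈ ℝ, σ > 0. Let π_SK(α,β) = (√(2πσ²)·αβ)^{-1}·exp(-(log α − μ)²/(2σ²)) for (α,β) ∈ (0,∞)². Then the posterior built from π_SK is improper: ∫_{(0,∞)²} ℓ_k(z|a,(α,β))·π_SK(α,β) dα dβ = +∞. -/

import Mathlib

open MeasureTheory Real Filter Set
open scoped ENNReal

/-- The standard Gaussian cumulative distribution function. -/
noncomputable def Phi (x : ℝ) : ℝ :=
  (Real.sqrt (2 * Real.pi))⁻¹ * ∫ t in Set.Iic x, Real.exp (-t ^ 2 / 2)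

/-- The likelihood of the log-normal (probit) fragility model. -/
noncomputable def lik (k : ℕ) (a : Fin k → ℝ) (z : Fin k → ℕ) (α β : ℝ) : ℝ :=
  ∏ i, Phi (Real.log (a i / α) / β) ^ (z i) *
    (1 - Phi (Real.log (a i / α) / β)) ^ (1 - z i)

/-- The prior of Straub and Der Kiureghian:
`π_SK(α,β) = (√(2πσ²)·αβ)⁻¹ exp(-(log α − μ)²/(2σ²))`. -/
noncomputable def piSK (μ σ α β : ℝ) : ℝ :=
  (Real.sqrt (2 * Real.pi * σ ^ 2) * α * β)⁻¹ *
    Real.exp (-(Real.log α - μ) ^ 2 / (2 * σ ^ 2))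

/-!
For `α ∈ [1, 2]` and `β ≥ 1` the probit arguments `log (a i / α) / β` stay in a fixed interval
`[-M, M]`, so every factor of the likelihood is at least `min (Φ (-M)) (1 - Φ M) > 0`. Moreover
`π_SK(α, β) = π_SK(α, 1) / β` with `π_SK(·, 1)` bounded below on `[1, 2]`. Hence the integrand
dominates `c / β` on `[1, 2] × [1, ∞)`, and `∫₁^∞ dβ / β = ∞`.
-/

lemma integrable_exp_neg_sq_div_two : Integrable fun t : ℝ => exp (-t ^ 2 / 2) := by
  simpa [neg_div, div_eq_inv_mul] using integrable_exp_neg_mul_sq (by norm_num : (0 : ℝ) < 2⁻¹)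

lemma integral_exp_neg_sq_div_two : ∫ t : ℝ, exp (-t ^ 2 / 2) = √(2 * π) := by
  simpa [neg_div, div_eq_inv_mul, mul_comm] using integral_gaussian (2⁻¹ : ℝ)

lemma setIntegral_exp_neg_sq_div_two_pos {s : Set ℝ} (hs : volume s ≠ 0) :
    0 < ∫ t in s, exp (-t ^ 2 / 2) := by
  rw [setIntegral_pos_iff_support_of_nonneg_ae (.of_forall fun t => (exp_pos _).le)
    integrable_exp_neg_sq_div_two.integrableOn]
  simpa [Function.support, exp_ne_zero, pos_iff_ne_zero] using hs

lemma Phi_pos (x : ℝ) : 0 < Phi x :=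
  mul_pos (by positivity) (setIntegral_exp_neg_sq_div_two_pos (s := Iic x) (by simp))

lemma Phi_lt_one (x : ℝ) : Phi x < 1 := by
  have hsplit := intervalIntegral.integral_Iic_add_Ioi (b := x)
    integrable_exp_neg_sq_div_two.integrableOn integrable_exp_neg_sq_div_two.integrableOn
  have htail := setIntegral_exp_neg_sq_div_two_pos (s := Ioi x) (by simp)
  rw [integral_exp_neg_sq_div_two] at hsplit
  rw [Phi, inv_mul_lt_iff₀ (by positivity)]
  linarith

lemma Phi_mono : Monotone Phi := fun x y hxy => by
  refine mul_le_mul_of_nonneg_left ?_ (by positivity)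
  exact setIntegral_mono_set integrable_exp_neg_sq_div_two.integrableOn
    (.of_forall fun t => (exp_pos _).le) (Iic_subset_Iic.mpr hxy).eventuallyLE

lemma piSK_eq_inv_mul (μ σ α β : ℝ) : piSK μ σ α β = β⁻¹ * piSK μ σ α 1 := by
  simp only [piSK, mul_inv, mul_one]
  ring

lemma lintegral_prod_Ici_one_inv_eq_top {s : Set ℝ} (hs : volume s ≠ 0) {c : ℝ} (hc : 0 < c) :
    ∫⁻ θ in s ×ˢ Ici (1 : ℝ), ENNReal.ofReal (c * θ.2⁻¹) = ⊤ := by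
  have hinner : ∫⁻ β in Ici (1 : ℝ), ENNReal.ofReal (c * β⁻¹) = ⊤ := by
    rw [← not_ne_iff, lintegral_ofReal_ne_top_iff_integrable (by fun_prop)
      ((ae_restrict_iff' measurableSet_Ici).2 (.of_forall fun β hβ => by
        have : (0 : ℝ) < β := zero_lt_one.trans_le hβ
        positivity))]
    intro h
    refine not_integrableOn_Ici_inv (a := 1) ?_
    simpa [IntegrableOn, hc.ne'] using h.const_mul c⁻¹
  rw [Measure.volume_eq_prod, setLIntegral_prod _ (by fun_prop)]
  simp [hinner, hs]

lemma abs_log_le_one_of_mem_Icc {α : ℝ} (hα : α ∈ Icc (1 : ℝ) 2) : |log α| ≤ 1 := by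
  rw [abs_of_nonneg (log_nonneg hα.1)]
  linarith [log_le_sub_one_of_pos (zero_lt_one.trans_le hα.1), hα.2]

lemma exists_pos_le_lik {k : ℕ} (a : Fin k → ℝ) (ha : ∀ i, a i ≠ 0) (z : Fin k → ℕ) :
    ∃ c > 0, ∀ α ∈ Icc (1 : ℝ) 2, ∀ β, 1 ≤ β → c ≤ lik k a z α β := by
  set M := ∑ j, |log (a j)| + 1
  set m := min (Phi (-M)) (1 - Phi M)
  have hm : 0 < m := lt_min (Phi_pos _) (sub_pos.2 (Phi_lt_one _))
  refine ⟨∏ i, m ^ z i * m ^ (1 - z i), by positivity, fun α hα β hβ => ?_⟩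
  refine Finset.prod_le_prod (fun i _ => by positivity) fun i _ => ?_
  have hx : |log (a i / α) / β| ≤ M := calc
    |log (a i / α) / β| ≤ |log (a i / α)| := by
      rw [abs_div, abs_of_pos (zero_lt_one.trans_le hβ)]
      exact div_le_self (abs_nonneg _) hβ
    _ ≤ |log (a i)| + |log α| := by
      rw [log_div (ha i) (zero_lt_one.trans_le hα.1).ne']
      exact abs_sub _ _
    _ ≤ M := add_le_add
      (Finset.single_le_sum (fun j _ => abs_nonneg (log (a j))) (Finset.mem_univ i))
      (abs_log_le_one_of_mem_Icc hα)
  have hlow : m ≤ Phi (log (a i / α) / β) :=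
    (min_le_left _ _).trans (Phi_mono (neg_le_of_abs_le hx))
  have hupp : m ≤ 1 - Phi (log (a i / α) / β) :=
    (min_le_right _ _).trans (sub_le_sub_left (Phi_mono (le_of_abs_le hx)) 1)
  have := (Phi_pos (log (a i / α) / β)).le
  gcongr

lemma exists_pos_le_piSK_one (μ : ℝ) {σ : ℝ} (hσ : σ ≠ 0) :
    ∃ c > 0, ∀ α ∈ Icc (1 : ℝ) 2, c ≤ piSK μ σ α 1 := by
  refine ⟨(√(2 * π * σ ^ 2) * 2 * 1)⁻¹ * exp (-(1 + |μ|) ^ 2 / (2 * σ ^ 2)), by positivity,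
    fun α hα => ?_⟩
  have hlog : |log α - μ| ≤ 1 + |μ| :=
    (abs_sub _ _).trans (add_le_add_left (abs_log_le_one_of_mem_Icc hα) _)
  have hsq : (log α - μ) ^ 2 ≤ (1 + |μ|) ^ 2 := sq_le_sq' (abs_le.1 hlog).1 (abs_le.1 hlog).2
  have hα0 : 0 < α := zero_lt_one.trans_le hα.1
  unfold piSK
  gcongr
  exact hα.2

theorem stmt15_general (k : ℕ) (a : Fin k → ℝ) (ha : ∀ i, 0 < a i)
    (z : Fin k → ℕ) (μ σ : ℝ) (hσ : 0 < σ) :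
    ∫⁻ θ in Set.Ioi (0 : ℝ) ×ˢ Set.Ioi (0 : ℝ),
      ENNReal.ofReal (lik k a z θ.1 θ.2 * piSK μ σ θ.1 θ.2) = ⊤ := by
  obtain ⟨c₁, hc₁, hlik⟩ := exists_pos_le_lik a (fun i => (ha i).ne') z
  obtain ⟨c₂, hc₂, hprior⟩ := exists_pos_le_piSK_one μ hσ.ne'
  have hbound : ∀ θ ∈ Icc (1 : ℝ) 2 ×ˢ Ici (1 : ℝ),
      c₁ * c₂ * θ.2⁻¹ ≤ lik k a z θ.1 θ.2 * piSK μ σ θ.1 θ.2 := by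
    rintro ⟨α, β⟩ ⟨hα, hβ⟩
    have hβ0 : 0 < β := zero_lt_one.trans_le hβ
    have hlik' := hlik α hα β hβ
    calc c₁ * c₂ * β⁻¹ = c₁ * (β⁻¹ * c₂) := by ring
      _ ≤ lik k a z α β * (β⁻¹ * piSK μ σ α 1) := by
        gcongr
        exacts [hc₁.le.trans hlik', hprior α hα]
      _ = lik k a z α β * piSK μ σ α β := by rw [← piSK_eq_inv_mul]
  have hsub : Icc (1 : ℝ) 2 ×ˢ Ici (1 : ℝ) ⊆ Ioi 0 ×ˢ Ioi 0 := fun θ ⟨hα, hβ⟩ =>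
    ⟨zero_lt_one.trans_le hα.1, zero_lt_one.trans_le (mem_Ici.1 hβ)⟩
  refine eq_top_iff.2 (calc
    ⊤ = ∫⁻ θ in Icc (1 : ℝ) 2 ×ˢ Ici (1 : ℝ), ENNReal.ofReal (c₁ * c₂ * θ.2⁻¹) :=
      (lintegral_prod_Ici_one_inv_eq_top (by simp) (mul_pos hc₁ hc₂)).symm
    _ ≤ ∫⁻ θ in Icc (1 : ℝ) 2 ×ˢ Ici (1 : ℝ),
        ENNReal.ofReal (lik k a z θ.1 θ.2 * piSK μ σ θ.1 θ.2) :=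
      setLIntegral_mono' (measurableSet_Icc.prod measurableSet_Ici)
        fun θ hθ => ENNReal.ofReal_le_ofReal (hbound θ hθ)
    _ ≤ _ := lintegral_mono_set hsub)

/-- The posterior built from `π_SK` is improper:
`∫_{(0,∞)²} ℓ_k(z|a,(α,β))·π_SK(α,β) dα dβ = +∞`. -/
theorem stmt15 (k : ℕ) (hk : 1 ≤ k) (a : Fin k → ℝ) (ha : ∀ i, 0 < a i)
    (z : Fin k → ℕ) (hz : ∀ i, z i = 0 ∨ z i = 1) (μ σ : ℝ) (hσ : 0 < σ) :
    ∫⁻ θ in Set.Ioi (0 : ℝ) ×ˢ Set.Ioi (0 : ℝ),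
      ENNReal.ofReal (lik k a z θ.1 θ.2 * piSK μ σ θ.1 θ.2) = ⊤ :=
  stmt15_general k a ha z μ σ hσ
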